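/- Let A be a schurian S-ring over a finite abelian group G and let S = U/L be an A-section of G such that at least one of the following conditions holds: (1) A is a CI-S-ring and S_r is a normal subgroup of Aut(A)^S; (2) A_S is a normal CI-S-ring. Then for every f ∈ iso_e(A) with S^f = S, the induced bijection f^S is an automorphism of the group S. In particular, f^S = id_S whenever f^S fixes pointwise a generating set of S. -/

import Mathlib

open Pointwise

/-! ### Cayley digraphs and CI-subsets (groups written additively) -/

/-- The arc set `R(S) = {(g, s+g) : g ∈ G, s ∈ S}` of the Cayley digraph `Cay(G,S)`. -/
def arcs {G : Type*} [AddGroup G] (S : Set G) : Set (G × G) :=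
  {a | ∃ s ∈ S, a.2 = s + a.1}

/-- The image `R^f` of a set of arcs under a permutation `f`. -/
def pmap {G : Type*} (f : Equiv.Perm G) (R : Set (G × G)) : Set (G × G) :=
  (fun a => (f a.1, f a.2)) '' R

/-- `S ⊆ G` is a CI-subset: every Cayley digraph isomorphic to `Cay(G,S)` is Cayley
isomorphic to it. -/
def IsCISubset {G : Type*} [AddGroup G] (S : Set G) : Prop :=
  ∀ T : Set G, (∃ f : Equiv.Perm G, pmap f (arcs S) = arcs T) →
    ∃ φ : G ≃+ G, ⇑φ '' S = T

/-- `G` is a DCI-group: every subset of `G` is a CI-subset. -/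
def IsDCI (G : Type*) [AddGroup G] : Prop := ∀ S : Set G, IsCISubset S

/-! ### S-rings, given by their partitions into basic sets.

The condition that the ℤ-span of the blocks is a subring of the group ring is encoded
combinatorially: the number of ways to write an element as a sum `x + y` with `x ∈ X`,
`y ∈ Y` (for blocks `X, Y`) is constant on each block. -/

structure SRing (G : Type*) [AddGroup G] where
  blocks : Set (Set G)
  nonempty_mem : ∀ X ∈ blocks, X.Nonempty
  existsUnique_mem : ∀ g : G, ∃! X, X ∈ blocks ∧ g ∈ X
  zero_mem : ({0} : Set G) ∈ blocks
  neg_mem : ∀ X ∈ blocks, -X ∈ blocks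
  count_const : ∀ X ∈ blocks, ∀ Y ∈ blocks, ∀ Z ∈ blocks, ∀ z ∈ Z, ∀ z' ∈ Z,
    {a : G × G | a.1 ∈ X ∧ a.2 ∈ Y ∧ a.1 + a.2 = z}.ncard =
      {a : G × G | a.1 ∈ X ∧ a.2 ∈ Y ∧ a.1 + a.2 = z'}.ncard

/-- The automorphisms of an S-ring with family of basic sets `Bl`:
permutations preserving each arc set `R(X)`, `X ∈ Bl`. -/
def autPerm {G : Type*} [AddGroup G] (Bl : Set (Set G)) : Set (Equiv.Perm G) :=
  {f | ∀ X ∈ Bl, pmap f (arcs X) = arcs X}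

/-- The isomorphisms from an S-ring with basic sets `Bl` onto some S-ring over `G`. -/
def isoPerm {G : Type*} [AddGroup G] (Bl : Set (Set G)) : Set (Equiv.Perm G) :=
  {f | ∃ B : SRing G,
    {R | ∃ X ∈ Bl, R = pmap f (arcs X)} = {R | ∃ Y ∈ B.blocks, R = arcs Y}}

/-- An S-ring is CI if `iso(A) = Aut(A)Aut(G)` (composition: first the S-ring
automorphism, then the group automorphism). -/
def IsCIBlocks {G : Type*} [AddGroup G] (Bl : Set (Set G)) : Prop :=
  isoPerm Bl = {f | ∃ γ ∈ autPerm Bl, ∃ φ : G ≃+ G, ∀ x, f x = φ (γ x)}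

/-- The right translation `x ↦ x + g` as a permutation. -/
def addRightPerm {G : Type*} [AddGroup G] (g : G) : Equiv.Perm G := Equiv.addRight g

/-- `G_r`, the set of right translations of `G`. -/
def rSet (G : Type*) [AddGroup G] : Set (Equiv.Perm G) := Set.range addRightPerm

/-- The basic sets of `V(K,G)`: the orbits on `G` of the stabilizer `K_e` of the
identity in `K`. -/
def VBlocks {G : Type*} [AddGroup G] (K : Set (Equiv.Perm G)) : Set (Set G) :=
  {O | ∃ g : G, O = {h | ∃ k ∈ K, k 0 = 0 ∧ k g = h}}

/-- An S-ring is schurian if it equals `V(K,G)` for some `G_r ≤ K ≤ Sym(G)`. -/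
def IsSchurianBlocks {G : Type*} [AddGroup G] (Bl : Set (Set G)) : Prop :=
  ∃ K : Subgroup (Equiv.Perm G), rSet G ⊆ (K : Set (Equiv.Perm G)) ∧
    Bl = VBlocks (K : Set (Equiv.Perm G))

/-- `f` lies in the 2-closure of `K`: on every pair it agrees with some member of `K`. -/
def in2Closure {G : Type*} (K : Set (Equiv.Perm G)) (f : Equiv.Perm G) : Prop :=
  ∀ a b : G, ∃ k ∈ K, k a = f a ∧ k b = f b

/-- `K` is 2-closed: `K = K^(2)`. -/
def Is2Closed {G : Type*} (K : Subgroup (Equiv.Perm G)) : Prop :=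
  ∀ f, in2Closure (K : Set (Equiv.Perm G)) f → f ∈ K

/-- Conjugate `S^γ` of a set of permutations. -/
def conjSet {G : Type*} (γ : Equiv.Perm G) (S : Set (Equiv.Perm G)) : Set (Equiv.Perm G) :=
  (fun s => γ⁻¹ * s * γ) '' S

/-- `K1 ⪯_G K2`: `K1` is a `G`-complete subgroup of `K2`. -/
def GComplete {G : Type*} [AddGroup G] (K1 K2 : Subgroup (Equiv.Perm G)) : Prop :=
  K1 ≤ K2 ∧ ∀ γ : Equiv.Perm G, conjSet γ (rSet G) ⊆ (K2 : Set (Equiv.Perm G)) →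
    ∃ δ ∈ K2, conjSet δ (conjSet γ (rSet G)) ⊆ (K1 : Set (Equiv.Perm G))

/-- `K ∈ Sup_2(G_r)`: `K` is a 2-closed subgroup of `Sym(G)` containing `G_r`. -/
def InSup2 {G : Type*} [AddGroup G] (K : Subgroup (Equiv.Perm G)) : Prop :=
  rSet G ⊆ (K : Set (Equiv.Perm G)) ∧ Is2Closed K

/-- `K ∈ Sup_2^min(G_r)`: `K` is a minimal element of `(Sup_2(G_r), ⪯_G)`. -/
def InSup2Min {G : Type*} [AddGroup G] (K : Subgroup (Equiv.Perm G)) : Prop :=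
  InSup2 K ∧ ∀ K' : Subgroup (Equiv.Perm G), InSup2 K' → GComplete K' K → K' = K

/-! ### A-sets, A-subgroups, sections, radicals, products -/

/-- `X` is an `A`-set: a union of basic sets. -/
def IsASet {G : Type*} [AddGroup G] (Bl : Set (Set G)) (X : Set G) : Prop :=
  ∃ C ⊆ Bl, X = ⋃₀ C

/-- An `A`-subgroup. -/
def IsASubgroup {G : Type*} [AddGroup G] (Bl : Set (Set G)) (U : AddSubgroup G) : Prop :=
  IsASet Bl (U : Set G)

/-- The radical `rad(X) = {g : g + X = X + g = X}`. -/
def radSet {G : Type*} [AddGroup G] (X : Set G) : Set G :=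
  {g | (fun x => g + x) '' X = X ∧ (fun x => x + g) '' X = X}

/-- `A` is the `S`-wreath (generalized wreath) product for the section `S = U/L`. -/
def IsWreath {G : Type*} [AddGroup G] (Bl : Set (Set G)) (U L : AddSubgroup G) : Prop :=
  IsASubgroup Bl U ∧ IsASubgroup Bl L ∧ L ≤ U ∧ L.Normal ∧
    ∀ X ∈ Bl, ¬X ⊆ (U : Set G) → (L : Set G) ⊆ radSet X

/-- Nontrivial (proper) `S`-wreath product. -/
def IsNontrivialWreath {G : Type*} [AddGroup G] (Bl : Set (Set G))
    (U L : AddSubgroup G) : Prop :=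
  IsWreath Bl U L ∧ L ≠ ⊥ ∧ U ≠ ⊤

/-- `A` is decomposable: a nontrivial generalized wreath product. -/
def IsDecomposable {G : Type*} [AddGroup G] (Bl : Set (Set G)) : Prop :=
  ∃ U L : AddSubgroup G, IsNontrivialWreath Bl U L

/-! ### Cyclotomic S-rings, Cayley minimality, 2-minimality, normality -/

/-- The multiplicative group structure (composition) on `AddAut G`, as in the older Mathlib. -/
instance addAutGroupComp {G : Type*} [Add G] : Group (AddAut G) where
  mul g h := AddEquiv.trans h g
  one := AddEquiv.refl _
  inv := AddEquiv.symm
  mul_assoc _ _ _ := rfl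
  one_mul _ := rfl
  mul_one _ := rfl
  inv_mul_cancel := AddEquiv.self_trans_symm

/-- The set of orbits on `G` of a group `M` of automorphisms of `G`. -/
def autOrbits {G : Type*} [AddGroup G] (M : Subgroup (AddAut G)) : Set (Set G) :=
  {O | ∃ g : G, O = {h | ∃ φ ∈ M, φ g = h}}

/-- An S-ring is cyclotomic if its basic sets are the orbits of a group of
automorphisms of `G`. -/
def IsCyclotomic {G : Type*} [AddGroup G] (Bl : Set (Set G)) : Prop :=
  ∃ M : Subgroup (AddAut G), Bl = autOrbits M

/-- `aut_G(A) = Aut(A) ∩ Aut(G)`. -/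
def autAddSet {G : Type*} [AddGroup G] (Bl : Set (Set G)) : Set (AddAut G) :=
  {φ | (φ : G ≃+ G).toEquiv ∈ autPerm Bl}

/-- Two sets of automorphisms have the same orbits on `G`. -/
def sameAutOrbits {G : Type*} [AddGroup G] (K M : Set (AddAut G)) : Prop :=
  ∀ g : G, {h | ∃ φ ∈ K, φ g = h} = {h | ∃ φ ∈ M, φ g = h}

/-- A (cyclotomic) S-ring is Cayley minimal if the only subgroup of `Aut(G)` Cayley
equivalent to `aut_G(A)` is `aut_G(A)` itself. -/
def IsCayleyMinimal {G : Type*} [AddGroup G] (Bl : Set (Set G)) : Prop :=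
  IsCyclotomic Bl ∧ ∀ K : Subgroup (AddAut G),
    sameAutOrbits (K : Set (AddAut G)) (autAddSet Bl) →
      (K : Set (AddAut G)) = autAddSet Bl

/-- Two sets of permutations have the same orbits on `G × G`. -/
def samePairOrbits {G : Type*} (K M : Set (Equiv.Perm G)) : Prop :=
  ∀ a b : G, {c : G × G | ∃ f ∈ K, (f a, f b) = c} = {c : G × G | ∃ f ∈ M, (f a, f b) = c}

/-- An S-ring is 2-minimal if the only subgroup of `Sym(G)` containing `G_r` and
2-equivalent to `Aut(A)` is `Aut(A)` itself. -/
def Is2Minimal {G : Type*} [AddGroup G] (Bl : Set (Set G)) : Prop :=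
  ∀ K : Subgroup (Equiv.Perm G), rSet G ⊆ (K : Set (Equiv.Perm G)) →
    samePairOrbits (K : Set (Equiv.Perm G)) (autPerm Bl) →
      (K : Set (Equiv.Perm G)) = autPerm Bl

/-- An S-ring is normal if `G_r` is normal in `Aut(A)`. -/
def IsNormalBlocks {G : Type*} [AddGroup G] (Bl : Set (Set G)) : Prop :=
  ∀ σ ∈ autPerm Bl, ∀ t ∈ rSet G, σ * t * σ⁻¹ ∈ rSet G

/-- A set of permutations normalizes another one. -/
def normalizesInto {M : Type*} [Group M] (Δ N : Set M) : Prop :=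
  ∀ σ ∈ Δ, ∀ t ∈ N, σ * t * σ⁻¹ ∈ N

/-! ### Kernels, restriction to subgroups, quotients and sections -/

/-- `Aut(A)_{G/L}`: the automorphisms of the S-ring fixing every `L`-coset setwise. -/
def kernelPerm {G : Type*} [AddGroup G] (Bl : Set (Set G)) (L : AddSubgroup G) :
    Set (Equiv.Perm G) :=
  {f | f ∈ autPerm Bl ∧ ∀ g : G, ⇑f '' ((L : Set G) + {g}) = (L : Set G) + {g}}

/-- The basic sets of `A_U` (for an `A`-subgroup `U`), as subsets of `U`. -/
def subBlocks {G : Type*} [AddGroup G] (Bl : Set (Set G)) (U : AddSubgroup G) :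
    Set (Set U) :=
  {Z | ∃ X ∈ Bl, X ⊆ (U : Set G) ∧ Z = ((Subtype.val) ⁻¹' X : Set U)}

/-- The basic sets of `A_{G/L}`: images of basic sets under `G → G/L`. -/
def quotBlocks {G : Type*} [AddGroup G] (Bl : Set (Set G)) (L : AddSubgroup G) :
    Set (Set (G ⧸ L)) :=
  {Z | ∃ X ∈ Bl, Z = (QuotientAddGroup.mk : G → G ⧸ L) '' X}

/-- The basic sets of `A_S` for the section `S = U/L`: images under `U → U/L` of the
basic sets contained in `U`. -/
def secBlocks {G : Type*} [AddGroup G] (Bl : Set (Set G)) (U L : AddSubgroup G) :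
    Set (Set (U ⧸ L.addSubgroupOf U)) :=
  {Z | ∃ X ∈ Bl, X ⊆ (U : Set G) ∧
    Z = (QuotientAddGroup.mk : U → U ⧸ L.addSubgroupOf U) '' {u : U | (u : G) ∈ X}}

/-- The permutations of an (invariant) subgroup `U` induced by members of `F`. -/
def inducedPerm {G : Type*} [AddGroup G] (F : Set (Equiv.Perm G)) (U : AddSubgroup G) :
    Set (Equiv.Perm U) :=
  {σ | ∃ f ∈ F, ∀ x : U, (σ x : G) = f (x : G)}

/-- The automorphisms of an (invariant) subgroup `U` induced by members of `F ⊆ Aut(G)`. -/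
def inducedAddAut {G : Type*} [AddGroup G] (F : Set (AddAut G)) (U : AddSubgroup G) :
    Set (AddAut U) :=
  {σ | ∃ φ ∈ F, ∀ x : U, ((σ x : U) : G) = φ (x : G)}

/-- `S^f = S`: the permutation `f` maps `U` onto itself and permutes the `L`-cosets
inside `U`. -/
def secInvariant {G : Type*} [AddGroup G] (f : Equiv.Perm G) (U L : AddSubgroup G) : Prop :=
  ⇑f '' (U : Set G) = (U : Set G) ∧
    ∀ u ∈ U, ⇑f '' ((L : Set G) + {u}) = (L : Set G) + {f u}

/-- `σ` is the bijection `f^S` of the section `S = U/L` induced by `f`. -/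
def inducesOnSec {G : Type*} [AddGroup G] (f : Equiv.Perm G) (U L : AddSubgroup G)
    (σ : Equiv.Perm (U ⧸ L.addSubgroupOf U)) : Prop :=
  ∀ u v : U, f (u : G) = (v : G) →
    σ (QuotientAddGroup.mk u) = QuotientAddGroup.mk v

/-- `Δ^S`: the bijections of the section `S = U/L` induced by members of `Δ`
leaving `S` invariant. -/
def secPerms {G : Type*} [AddGroup G] (F : Set (Equiv.Perm G)) (U L : AddSubgroup G) :
    Set (Equiv.Perm (U ⧸ L.addSubgroupOf U)) :=
  {σ | ∃ f ∈ F, secInvariant f U L ∧ inducesOnSec f U L σ}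

/-- `K^S` for `K ≤ Aut(U)`: automorphisms of `S = U/L` induced by members of `K`. -/
def secAutOfSub {G : Type*} [AddCommGroup G] (U L : AddSubgroup G)
    (K : Set (AddAut U)) : Set (AddAut (U ⧸ L.addSubgroupOf U)) :=
  {ψ | ∃ φ ∈ K, ∀ u : U, ψ (QuotientAddGroup.mk u) = QuotientAddGroup.mk (φ u)}

/-- `K^S` for `K ≤ Aut(G/L)`: automorphisms of `S = U/L` obtained by restricting
members of `K`. -/
def secAutOfQuot {G : Type*} [AddCommGroup G] (U L : AddSubgroup G)
    (K : Set (AddAut (G ⧸ L))) : Set (AddAut (U ⧸ L.addSubgroupOf U)) :=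
  {ψ | ∃ φ ∈ K, ∀ u v : U,
    φ (QuotientAddGroup.mk (u : G)) = QuotientAddGroup.mk (v : G) →
      ψ (QuotientAddGroup.mk u) = QuotientAddGroup.mk v}

/-! ### p-S-rings and some particular S-rings -/

/-- A `p`-S-ring: all basic sets have `p`-power size. -/
def IsPSRing {G : Type*} [AddGroup G] (p : ℕ) (Bl : Set (Set G)) : Prop :=
  ∀ X ∈ Bl, ∃ k : ℕ, X.ncard = p ^ k

/-- The family `Bl` of basic sets is that of `ℤC_p ≀ ℤC_p ≀ ℤC_p`: singletons in `B1`,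
`B1`-cosets in `B2 \ B1`, and `B2`-cosets outside `B2`. -/
def IsWr3Blocks {G : Type*} [AddGroup G] (p : ℕ) (Bl : Set (Set G)) : Prop :=
  ∃ B1 B2 : AddSubgroup G, B1 < B2 ∧ (B1 : Set G).ncard = p ∧
    (B2 : Set G).ncard = p ^ 2 ∧
    ∀ X : Set G, X ∈ Bl ↔
      ((∃ x ∈ B1, X = {x}) ∨
        (∃ x ∈ (B2 : Set G) \ (B1 : Set G), X = (B1 : Set G) + {x}) ∨
        (∃ x ∈ (Set.univ : Set G) \ (B2 : Set G), X = (B2 : Set G) + {x}))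

/-- The family `Bl` of basic sets is that of `ℤC_p ≀ ℤC_p²`: singletons in `B1` and
`B1`-cosets outside `B1`. -/
def IsWrCpCp2Blocks {G : Type*} [AddGroup G] (p : ℕ) (Bl : Set (Set G)) : Prop :=
  ∃ B1 : AddSubgroup G, (B1 : Set G).ncard = p ∧
    ∀ X : Set G, X ∈ Bl ↔
      ((∃ x ∈ B1, X = {x}) ∨ (∃ x : G, x ∉ B1 ∧ X = (B1 : Set G) + {x}))

/-- The unipotent map `σ(x,y,z) = (x, x+y, y+z)` on `(ℤ/p)³` defining `D_p`. -/
def dpStep (p : ℕ) (v : Fin 3 → ZMod p) : Fin 3 → ZMod p :=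
  ![v 0, v 0 + v 1, v 1 + v 2]

/-- The orbit of a point under the cyclic group generated by `σ`. -/
def dpOrbit (p : ℕ) (x : Fin 3 → ZMod p) : Set (Fin 3 → ZMod p) :=
  {y | ∃ k : ℕ, (dpStep p)^[k] x = y}

/-- The family `Bl` of basic sets is (isomorphic to) that of the S-ring `D_p`. -/
def IsDpBlocks {W : Type*} [AddGroup W] (p : ℕ) (Bl : Set (Set W)) : Prop :=
  ∃ e : W ≃+ (Fin 3 → ZMod p), (fun X => ⇑e '' X) '' Bl = Set.range (dpOrbit p)

/-! ### Cayley graph automorphisms and regular subgroups -/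

/-- `Aut(Cay(G,X))`. -/
def autCaySet {G : Type*} [AddGroup G] (X : Set G) : Set (Equiv.Perm G) :=
  {f | pmap f (arcs X) = arcs X}

/-- A regular subgroup of `Sym(G)`: transitive, and only the identity has a fixed point. -/
def IsRegularSubgroup {G : Type*} (K : Subgroup (Equiv.Perm G)) : Prop :=
  (∀ a b : G, ∃ k ∈ K, k a = b) ∧ ∀ k ∈ K, (∃ a : G, k a = a) → k = 1

/-! ### The groups `C_p^4 × C_q` -/

/-- The Sylow `p`-subgroup `P` of `C_p^4 × C_q`. -/
def Psub (p q : ℕ) : AddSubgroup ((Fin 4 → ZMod p) × ZMod q) :=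
  (⊤ : AddSubgroup (Fin 4 → ZMod p)).prod ⊥

/-- The Sylow `q`-subgroup `Q` of `C_p^4 × C_q`. -/
def Qsub (p q : ℕ) : AddSubgroup ((Fin 4 → ZMod p) × ZMod q) :=
  (⊥ : AddSubgroup (Fin 4 → ZMod p)).prod ⊤

/-!
An additive bijection of `S` that fixes a generating set is the identity, so everything comes
down to the additivity of `σ = f^S`. The basic tool: a bijection `c` with `c 0 = 0` normalizing
the right translations is additive, because `c (x + y) - c x` does not depend on `x`.

In case (1), `f = φ γ` with `φ ∈ Aut(G)` and `γ ∈ Aut(A)` fixing `0`; `γ^S ∈ Aut(A)^S` normalizes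
`S_r`, and `σ (γ^S)⁻¹ = φ^S` is additive. In case (2), `f` maps `A` onto an S-ring `A'` with the
same `A'`-subgroups `U` and `L`, and `σ` maps `A_S` onto the section S-ring `A'_S`; so `σ` lies in
`iso(A_S) = Aut(A_S) Aut(S)`, and the `Aut(A_S)`-factor fixes `0` and normalizes `S_r` because
`A_S` is normal.

That `A'_S` is an S-ring is a counting argument: for basic sets `X, Y ⊆ U` and `w ∈ U`, the
number of ways to write `w + L` as a sum from `X/L × Y/L`, multiplied by `|X ∩ (x + L)|`, is
`|{x ∈ X : w - x ∈ Y + L}|`, and this is constant on basic sets because `Y + L` is an `A'`-set.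
-/

section Pmap

variable {G : Type*}

lemma mem_pmap {f : Equiv.Perm G} {R : Set (G × G)} {a b : G} :
    (f a, f b) ∈ pmap f R ↔ (a, b) ∈ R :=
  (Equiv.prodCongr f f).injective.mem_set_image (a := (a, b))

lemma pmap_pmap_inv (f : Equiv.Perm G) (R : Set (G × G)) : pmap f (pmap f⁻¹ R) = R :=
  (Equiv.prodCongr f f).image_symm_image R

lemma pmap_mono (f : Equiv.Perm G) {R R' : Set (G × G)} (h : R ⊆ R') : pmap f R ⊆ pmap f R' :=
  Set.image_mono h

end Pmap

section Arcs

variable {G : Type*} [AddGroup G]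

lemma mem_arcs {X : Set G} {a b : G} : (a, b) ∈ arcs X ↔ b - a ∈ X :=
  ⟨fun ⟨s, hs, (h : b = s + a)⟩ => by rwa [h, add_sub_cancel_right],
    fun h => ⟨b - a, h, (sub_add_cancel b a).symm⟩⟩

lemma sub_mem_iff_of_pmap_arcs {f : Equiv.Perm G} {X Y : Set G}
    (h : pmap f (arcs X) = arcs Y) (a b : G) : b - a ∈ X ↔ f b - f a ∈ Y := by
  rw [← mem_arcs, ← mem_arcs, ← h, mem_pmap]

lemma eq_image_of_pmap_arcs {f : Equiv.Perm G} (hf0 : f 0 = 0) {X Y : Set G}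
    (h : pmap f (arcs X) = arcs Y) : Y = f '' X := by
  ext y
  have := sub_mem_iff_of_pmap_arcs h 0 (f.symm y)
  simp only [sub_zero, hf0, Equiv.apply_symm_apply] at this
  rw [Equiv.image_eq_preimage_symm, Set.mem_preimage, this]

end Arcs

lemma Set.ncard_inter_preimage_eq_mul {α β : Type*} [Finite α] [Finite β] (f : α → β)
    (s : Set α) (t : Set β) {k : ℕ} (hk : ∀ b ∈ t, (s ∩ f ⁻¹' {b}).ncard = k) :
    (s ∩ f ⁻¹' t).ncard = t.ncard * k := by
  have hs : s ∩ f ⁻¹' t = ⋃ b ∈ t, s ∩ f ⁻¹' {b} := by ext; simp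
  rw [hs, t.toFinite.ncard_biUnion (fun _ _ => Set.toFinite _), finsum_mem_congr rfl hk,
    ← finsum_one, finsum_mem_mul, finsum_mem_congr rfl fun _ _ => one_mul k]
  intro b _ b' _ hne
  exact Set.disjoint_left.mpr fun x hx hx' => hne (hx.2.symm.trans hx'.2)

lemma ncard_addPairs_eq {G : Type*} [AddCommGroup G] (X Y : Set G) (z : G) :
    {a : G × G | a.1 ∈ X ∧ a.2 ∈ Y ∧ a.1 + a.2 = z}.ncard = (X ∩ {x | z - x ∈ Y}).ncard := by
  have h : {a : G × G | a.1 ∈ X ∧ a.2 ∈ Y ∧ a.1 + a.2 = z} =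
      (fun x => (x, z - x)) '' (X ∩ {x | z - x ∈ Y}) := by
    ext ⟨a, b⟩
    constructor
    · rintro ⟨ha, hb, rfl⟩
      exact ⟨a, ⟨ha, by simpa using hb⟩, by simp⟩
    · rintro ⟨x, ⟨hx, hy⟩, h⟩
      obtain ⟨rfl, rfl⟩ := Prod.mk.inj h
      exact ⟨hx, hy, add_sub_cancel x z⟩
  rw [h, Set.ncard_image_of_injective _ fun x y h => congrArg Prod.fst h]

namespace SRing

section Basic

variable {G : Type*} [AddGroup G] (B : SRing G)

lemma eq_of_mem {X Y : Set G} (hX : X ∈ B.blocks) (hY : Y ∈ B.blocks) {g : G} (hgX : g ∈ X)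
    (hgY : g ∈ Y) : X = Y :=
  (B.existsUnique_mem g).unique ⟨hX, hgX⟩ ⟨hY, hgY⟩

lemma exists_mem (g : G) : ∃ X ∈ B.blocks, g ∈ X :=
  let ⟨X, ⟨hX, hg⟩, _⟩ := B.existsUnique_mem g
  ⟨X, hX, hg⟩

lemma isASet_iff {P : Set G} :
    IsASet B.blocks P ↔ ∀ X ∈ B.blocks, ∀ x ∈ X, x ∈ P → X ⊆ P := by
  constructor
  · rintro ⟨C, hC, rfl⟩ X hX x hxX ⟨Y, hY, hxY⟩
    rw [B.eq_of_mem hX (hC hY) hxX hxY]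
    exact Set.subset_sUnion_of_mem hY
  · refine fun h => ⟨{X ∈ B.blocks | X ⊆ P}, fun X hX => hX.1, Set.ext fun x => ⟨fun hx => ?_, ?_⟩⟩
    · obtain ⟨X, hX, hxX⟩ := B.exists_mem x
      exact ⟨X, ⟨hX, h X hX x hxX hx⟩, hxX⟩
    · rintro ⟨X, ⟨-, hXP⟩, hxX⟩
      exact hXP hxX

lemma isASet_of_mem {X : Set G} (hX : X ∈ B.blocks) : IsASet B.blocks X :=
  ⟨{X}, Set.singleton_subset_iff.mpr hX, (Set.sUnion_singleton X).symm⟩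

end Basic

section Count

variable {G : Type*} [AddCommGroup G] [Finite G] (B : SRing G)

lemma ncard_inter_sub_mem_eq {X Z P : Set G} (hX : X ∈ B.blocks) (hZ : Z ∈ B.blocks)
    (hP : IsASet B.blocks P) {z z' : G} (hz : z ∈ Z) (hz' : z' ∈ Z) :
    (X ∩ {x | z - x ∈ P}).ncard = (X ∩ {x | z' - x ∈ P}).ncard := by
  obtain ⟨C, hC, rfl⟩ := hP
  have hsum : ∀ w : G,
      (X ∩ {x | w - x ∈ ⋃₀ C}).ncard = ∑ᶠ Y ∈ C, (X ∩ {x | w - x ∈ Y}).ncard := by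
    intro w
    rw [← (Set.toFinite C).ncard_biUnion (fun _ _ => Set.toFinite _)]
    · congr 1
      ext x
      simp [and_comm]
    · intro Y hY Y' hY' hne
      exact Set.disjoint_left.mpr fun x hx hx' => hne (B.eq_of_mem (hC hY) (hC hY') hx.2 hx'.2)
  rw [hsum, hsum]
  refine finsum_mem_congr rfl fun Y hY => ?_
  rw [← ncard_addPairs_eq, ← ncard_addPairs_eq]
  exact B.count_const X hX Y (hC hY) Z hZ z hz z' hz'

lemma isASet_add {P Q : Set G} (hP : IsASet B.blocks P) (hQ : IsASet B.blocks Q) :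
    IsASet B.blocks (P + Q) := by
  rw [isASet_iff] at hP hQ ⊢
  rintro Z hZ z hz ⟨p, hp, q, hq, rfl⟩ z' hz'
  obtain ⟨X, hX, hpX⟩ := B.exists_mem p
  obtain ⟨Y, hY, hqY⟩ := B.exists_mem q
  have hpos : ∀ w, w ∈ X + Y ↔ 0 < {a : G × G | a.1 ∈ X ∧ a.2 ∈ Y ∧ a.1 + a.2 = w}.ncard := by
    intro w
    rw [Set.ncard_pos, Set.mem_add]
    simp [Set.Nonempty]
  have hz'XY : z' ∈ X + Y := by
    rw [hpos, ← B.count_const X hX Y hY Z hZ _ hz z' hz', ← hpos]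
    exact Set.add_mem_add hpX hqY
  exact Set.add_subset_add (hP X hX p hpX hp) (hQ Y hY q hqY hq) hz'XY

end Count

end SRing

section SectionMaps

variable {G : Type*} [AddCommGroup G] {U L : AddSubgroup G}

lemma mem_coset_iff {x u : G} : x ∈ (L : Set G) + {u} ↔ x - u ∈ L := by
  rw [Set.add_singleton]
  exact ⟨fun ⟨l, hl, h⟩ => by rwa [← h, add_sub_cancel_right],
    fun h => ⟨x - u, h, sub_add_cancel x u⟩⟩

lemma secInvariant_iff {f : Equiv.Perm G} :
    secInvariant f U L ↔
      (∀ x, f x ∈ U ↔ x ∈ U) ∧ ∀ u ∈ U, ∀ x, f x - f u ∈ L ↔ x - u ∈ L := by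
  have himage : ∀ (S T : Set G), f '' S = T ↔ ∀ x, f x ∈ T ↔ x ∈ S := fun S T => by
    rw [Equiv.image_eq_preimage_symm, Set.ext_iff]
    exact ⟨fun h x => by simpa using (h (f x)).symm, fun h y => by simpa using (h (f.symm y)).symm⟩
  simp only [secInvariant, himage, mem_coset_iff]
  rfl

lemma secInvariant.mem_iff {f : Equiv.Perm G} (h : secInvariant f U L) (x : G) :
    f x ∈ U ↔ x ∈ U :=
  (secInvariant_iff.mp h).1 x

lemma secInvariant.sub_mem_iff {f : Equiv.Perm G} (h : secInvariant f U L) {u : G} (hu : u ∈ U)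
    (x : G) : f x - f u ∈ L ↔ x - u ∈ L :=
  (secInvariant_iff.mp h).2 u hu x

lemma secInvariant.inv {f : Equiv.Perm G} (h : secInvariant f U L) : secInvariant f⁻¹ U L := by
  refine secInvariant_iff.mpr ⟨fun x => ?_, fun u hu x => ?_⟩
  · simpa using (h.mem_iff (f⁻¹ x)).symm
  · have hu' : f⁻¹ u ∈ U := (h.mem_iff _).mp (by simpa using hu)
    simpa using (h.sub_mem_iff hu' (f⁻¹ x)).symm

lemma sub_mem_iff_of_mem_autPerm {Bl : Set (Set G)} {γ : Equiv.Perm G} (hγ : γ ∈ autPerm Bl)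
    {P : Set G} (hP : IsASet Bl P) (a b : G) : γ b - γ a ∈ P ↔ b - a ∈ P := by
  obtain ⟨C, hC, rfl⟩ := hP
  simp only [Set.mem_sUnion]
  exact exists_congr fun X => and_congr_right fun hX =>
    (sub_mem_iff_of_pmap_arcs (hγ X (hC hX)) a b).symm

lemma secInvariant_of_mem_autPerm {Bl : Set (Set G)} {γ : Equiv.Perm G} (hγ : γ ∈ autPerm Bl)
    (hγ0 : γ 0 = 0) (hU : IsASubgroup Bl U) (hL : IsASubgroup Bl L) : secInvariant γ U L :=
  secInvariant_iff.mpr ⟨fun x => by simpa [hγ0] using sub_mem_iff_of_mem_autPerm hγ hU 0 x,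
    fun u _ x => sub_mem_iff_of_mem_autPerm hγ hL u x⟩

lemma inducesOnSec.inv {f : Equiv.Perm G} {σ : Equiv.Perm (U ⧸ L.addSubgroupOf U)}
    (hσ : inducesOnSec f U L σ) : inducesOnSec f⁻¹ U L σ⁻¹ := by
  intro u v h
  rw [Equiv.Perm.inv_eq_iff_eq, hσ v u (by simp [← h])]

lemma inducesOnSec.mul {f g : Equiv.Perm G} {σ τ : Equiv.Perm (U ⧸ L.addSubgroupOf U)}
    (hσ : inducesOnSec f U L σ) (hτ : inducesOnSec g U L τ) (hg : ∀ x ∈ U, g x ∈ U) :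
    inducesOnSec (f * g) U L (σ * τ) := fun u v h =>
  (congrArg σ (hτ u ⟨g u, hg u u.2⟩ rfl)).trans (hσ _ v h)

lemma secInvariant.exists_inducesOnSec {f : Equiv.Perm G} (h : secInvariant f U L) :
    ∃ σ, inducesOnSec f U L σ := by
  let e : U ≃ U := f.subtypeEquiv fun x => (h.mem_iff x).symm
  refine ⟨Quotient.congr e fun a b => ?_, fun u v huv => ?_⟩
  · rw [QuotientAddGroup.leftRel_apply, QuotientAddGroup.leftRel_apply,
      AddSubgroup.mem_addSubgroupOf, AddSubgroup.mem_addSubgroupOf]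
    simpa [neg_add_eq_sub, e] using (h.sub_mem_iff a.2 b).symm
  · exact congrArg QuotientAddGroup.mk (Subtype.ext huv : e u = v)

end SectionMaps

section SectionImage

variable {G : Type*} [AddCommGroup G] {U L : AddSubgroup G}

def secImage (U L : AddSubgroup G) (X : Set G) : Set (U ⧸ L.addSubgroupOf U) :=
  (QuotientAddGroup.mk : U → U ⧸ L.addSubgroupOf U) '' {u : U | (u : G) ∈ X}

lemma mem_secBlocks {Bl : Set (Set G)} {Z : Set (U ⧸ L.addSubgroupOf U)} :
    Z ∈ secBlocks Bl U L ↔ ∃ X ∈ Bl, X ⊆ (U : Set G) ∧ Z = secImage U L X :=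
  Iff.rfl

lemma mk_mem_secImage_iff (hLU : L ≤ U) {X : Set G} (u : U) :
    (u : U ⧸ L.addSubgroupOf U) ∈ secImage U L X ↔ (u : G) ∈ X + L := by
  constructor
  · rintro ⟨v, hv, he⟩
    rw [QuotientAddGroup.eq, AddSubgroup.mem_addSubgroupOf] at he
    exact ⟨v, hv, _, he, by simp⟩
  · rintro ⟨x, hx, l, hl, hxl : x + l = u⟩
    have hxU : x ∈ U := by
      rw [eq_sub_of_add_eq hxl]
      exact sub_mem u.2 (hLU hl)
    refine ⟨⟨x, hxU⟩, hx, ?_⟩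
    rw [QuotientAddGroup.eq, AddSubgroup.mem_addSubgroupOf]
    simpa [← hxl] using hl

lemma mk_mem_arcs_secImage_iff (hLU : L ≤ U) {X : Set G} (u v : U) :
    ((u : U ⧸ L.addSubgroupOf U), (v : U ⧸ L.addSubgroupOf U)) ∈ arcs (secImage U L X) ↔
      (v : G) - u ∈ X + L := by
  rw [mem_arcs, ← QuotientAddGroup.mk_sub, mk_mem_secImage_iff hLU, AddSubgroup.coe_sub]

lemma secImage_subset_secImage (hLU : L ≤ U) {X Y : Set G} (h : X ⊆ Y + L) :
    secImage U L X ⊆ secImage U L Y := by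
  rintro _ ⟨u, hu, rfl⟩
  exact (mk_mem_secImage_iff hLU u).mpr (h hu)

lemma pmap_arcs_secImage_subset (hLU : L ≤ U) {f : Equiv.Perm G} (hfS : secInvariant f U L)
    {σ : Equiv.Perm (U ⧸ L.addSubgroupOf U)} (hσ : inducesOnSec f U L σ) {X Y : Set G}
    (hXY : ∀ a b, b - a ∈ X → f b - f a ∈ Y) :
    pmap σ (arcs (secImage U L X)) ⊆ arcs (secImage U L Y) := by
  rintro _ ⟨⟨s, t⟩, hst, rfl⟩
  obtain ⟨u, rfl⟩ := QuotientAddGroup.mk_surjective s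
  obtain ⟨v, rfl⟩ := QuotientAddGroup.mk_surjective t
  obtain ⟨x, hx, l, hl, hxl : x + l = v - u⟩ := (mk_mem_arcs_secImage_iff hLU u v).mp hst
  have hfu := hσ u ⟨f u, (hfS.mem_iff u).mpr u.2⟩ rfl
  have hfv := hσ v ⟨f v, (hfS.mem_iff v).mpr v.2⟩ rfl
  dsimp only at hfu hfv ⊢
  rw [hfu, hfv, mk_mem_arcs_secImage_iff hLU]
  -- `v - l = u + x` is sent into `f u + Y` and stays in the `L`-coset of `f v`
  have hvl : (v : G) - l ∈ U := sub_mem v.2 (hLU hl)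
  refine ⟨f (v - l) - f u, hXY _ _ ?_, f v - f (v - l), ?_, sub_add_sub_cancel' _ _ _⟩
  · rwa [sub_right_comm, ← hxl, add_sub_cancel_right]
  · rw [SetLike.mem_coe, hfS.sub_mem_iff hvl, sub_sub_cancel]
    exact hl

lemma pmap_arcs_secImage_eq (hLU : L ≤ U) {f : Equiv.Perm G} (hfS : secInvariant f U L)
    {σ : Equiv.Perm (U ⧸ L.addSubgroupOf U)} (hσ : inducesOnSec f U L σ) {X Y : Set G}
    (h : pmap f (arcs X) = arcs Y) :
    pmap σ (arcs (secImage U L X)) = arcs (secImage U L Y) := by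
  refine (pmap_arcs_secImage_subset hLU hfS hσ fun a b =>
    (sub_mem_iff_of_pmap_arcs h a b).mp).antisymm ?_
  have hinv := pmap_arcs_secImage_subset hLU hfS.inv hσ.inv (X := Y) (Y := X) fun a b hab =>
    (sub_mem_iff_of_pmap_arcs h _ _).mpr (by simpa using hab)
  exact (pmap_pmap_inv σ _).symm.subset.trans (pmap_mono σ hinv)

end SectionImage

namespace SRing

variable {G : Type*} [AddCommGroup G] [Finite G] (B : SRing G) {U L : AddSubgroup G}

lemma secImage_eq_of_mem (hLU : L ≤ U) (hL : IsASubgroup B.blocks L) {X X' : Set G}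
    (hX : X ∈ B.blocks) (hX' : X' ∈ B.blocks) {u : U} (hu : (u : G) ∈ X)
    (hu' : (u : U ⧸ L.addSubgroupOf U) ∈ secImage U L X') : secImage U L X' = secImage U L X := by
  rw [mk_mem_secImage_iff hLU] at hu'
  refine (secImage_subset_secImage hLU ?_).antisymm (secImage_subset_secImage hLU ?_)
  · obtain ⟨x', hx', l, hl, hxl : x' + l = u⟩ := hu'
    refine B.isASet_iff.mp (B.isASet_add (B.isASet_of_mem hX) hL) X' hX' x' hx'
      ⟨u, hu, -l, L.neg_mem hl, by simp [← hxl]⟩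
  · exact B.isASet_iff.mp (B.isASet_add (B.isASet_of_mem hX') hL) X hX u hu hu'

lemma ncard_inter_sub_mem_add_eq_mul (hLU : L ≤ U) (hL : IsASubgroup B.blocks L)
    {X Y : Set G} (hX : X ∈ B.blocks) (hXU : X ⊆ U) {x₀ : G} (hx₀ : x₀ ∈ X) (w : U) :
    (X ∩ {x | (w : G) - x ∈ Y + L}).ncard =
      (secImage U L X ∩ {s | (w : U ⧸ L.addSubgroupOf U) - s ∈ secImage U L Y}).ncard *
        (X ∩ {x | x₀ - x ∈ (L : Set G)}).ncard := by
  have hval : ∀ T ⊆ X, ((Subtype.val : U → G) ⁻¹' T).ncard = T.ncard := fun T hT =>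
    Set.ncard_preimage_of_injective_subset_range Subtype.val_injective
      (by simpa using hT.trans hXU)
  rw [← hval _ Set.inter_subset_left]
  convert Set.ncard_inter_preimage_eq_mul (QuotientAddGroup.mk : U → U ⧸ L.addSubgroupOf U)
    {u : U | (u : G) ∈ X} _ ?_ using 2
  · ext u
    simp only [Set.mem_inter_iff, Set.mem_preimage, Set.mem_ofPred_eq, ← QuotientAddGroup.mk_sub,
      mk_mem_secImage_iff hLU, AddSubgroup.coe_sub, and_congr_right_iff]
    exact fun hu => (and_iff_right ⟨u, hu, 0, L.zero_mem, add_zero _⟩).symm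
  · rintro _ ⟨⟨u₀, hu₀, rfl⟩, -⟩
    rw [← B.ncard_inter_sub_mem_eq hX hX hL hu₀ hx₀, ← hval _ Set.inter_subset_left]
    congr 1
    ext u
    simp [QuotientAddGroup.eq, AddSubgroup.mem_addSubgroupOf, neg_add_eq_sub]

def sec (hLU : L ≤ U) (hU : IsASubgroup B.blocks U) (hL : IsASubgroup B.blocks L) :
    SRing (U ⧸ L.addSubgroupOf U) where
  blocks := secBlocks B.blocks U L
  nonempty_mem Z hZ := by
    obtain ⟨X, hX, hXU, rfl⟩ := mem_secBlocks.mp hZ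
    obtain ⟨x, hx⟩ := B.nonempty_mem X hX
    exact ⟨_, ⟨x, hXU hx⟩, hx, rfl⟩
  existsUnique_mem s := by
    obtain ⟨u, rfl⟩ := QuotientAddGroup.mk_surjective s
    obtain ⟨X, hX, hu⟩ := B.exists_mem (u : G)
    have hXU : X ⊆ U := B.isASet_iff.mp hU X hX u hu u.2
    refine ⟨secImage U L X, ⟨⟨X, hX, hXU, rfl⟩, u, hu, rfl⟩, fun Z ⟨hZ, hu'⟩ => ?_⟩
    obtain ⟨X', hX', -, rfl⟩ := mem_secBlocks.mp hZ
    exact B.secImage_eq_of_mem hLU hL hX hX' hu hu'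
  zero_mem := by
    refine mem_secBlocks.mpr ⟨{0}, B.zero_mem, by simp, Set.ext fun s => ?_⟩
    obtain ⟨u, rfl⟩ := QuotientAddGroup.mk_surjective s
    simp [mk_mem_secImage_iff hLU, AddSubgroup.mem_addSubgroupOf]
  neg_mem Z hZ := by
    obtain ⟨X, hX, hXU, rfl⟩ := mem_secBlocks.mp hZ
    refine mem_secBlocks.mpr ⟨-X, B.neg_mem X hX, fun x hx => by simpa using U.neg_mem (hXU hx),
      Set.ext fun s => ?_⟩
    obtain ⟨u, rfl⟩ := QuotientAddGroup.mk_surjective s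
    rw [Set.mem_neg, ← QuotientAddGroup.mk_neg, mk_mem_secImage_iff hLU, mk_mem_secImage_iff hLU,
      AddSubgroup.coe_neg, ← Set.mem_neg, neg_add, neg_coe_set]
  count_const Xs hXs Ys hYs Zs hZs s hs s' hs' := by
    obtain ⟨X, hX, hXU, rfl⟩ := mem_secBlocks.mp hXs
    obtain ⟨Y, hY, -, rfl⟩ := mem_secBlocks.mp hYs
    obtain ⟨Z, hZ, -, rfl⟩ := mem_secBlocks.mp hZs
    obtain ⟨w, hw, rfl⟩ := hs
    obtain ⟨w', hw', rfl⟩ := hs'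
    obtain ⟨x₀, hx₀⟩ := B.nonempty_mem X hX
    have hk : 0 < (X ∩ {x | x₀ - x ∈ (L : Set G)}).ncard :=
      (Set.ncard_pos (Set.toFinite _)).mpr ⟨x₀, hx₀, by simp⟩
    rw [ncard_addPairs_eq, ncard_addPairs_eq]
    refine Nat.eq_of_mul_eq_mul_right hk ?_
    rw [← B.ncard_inter_sub_mem_add_eq_mul hLU hL hX hXU hx₀,
      ← B.ncard_inter_sub_mem_add_eq_mul hLU hL hX hXU hx₀]
    exact B.ncard_inter_sub_mem_eq hX hZ (B.isASet_add (B.isASet_of_mem hY) hL) hw hw'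

end SRing

lemma map_add_of_normalizes {H : Type*} [AddGroup H] {c : Equiv.Perm H} (hc0 : c 0 = 0)
    (hc : ∀ t ∈ rSet H, c * t * c⁻¹ ∈ rSet H) (x y : H) : c (x + y) = c x + c y := by
  obtain ⟨m, hm⟩ := hc (addRightPerm y) ⟨y, rfl⟩
  have key : ∀ x, c (x + y) = c x + m := fun x => by
    simpa [addRightPerm] using (congrArg (fun e : Equiv.Perm H => e (c x)) hm).symm
  have hm : c y = m := by simpa [hc0] using key 0
  rw [key, hm]

lemma IsCIBlocks.exists_eq_addEquiv_comp {G : Type*} [AddGroup G] {Bl : Set (Set G)}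
    (hCI : IsCIBlocks Bl) {f : Equiv.Perm G} (hf : f ∈ isoPerm Bl) (hf0 : f 0 = 0) :
    ∃ γ ∈ autPerm Bl, γ 0 = 0 ∧ ∃ φ : G ≃+ G, ∀ x, f x = φ (γ x) := by
  rw [hCI] at hf
  obtain ⟨γ, hγ, φ, hfφ⟩ := hf
  exact ⟨γ, hγ, φ.injective (by rw [← hfφ, hf0, map_zero]), φ, hfφ⟩

section Iso

variable {G : Type*} [AddCommGroup G] {U L : AddSubgroup G}

lemma IsASet.image (f : Equiv.Perm G) {Bl : Set (Set G)} {P : Set G} (hP : IsASet Bl P) :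
    IsASet ((f '' ·) '' Bl) (f '' P) := by
  obtain ⟨C, hC, rfl⟩ := hP
  exact ⟨(f '' ·) '' C, Set.image_mono hC, Set.image_sUnion⟩

lemma blocks_eq_image_of_mem_isoPerm {Bl : Set (Set G)} {f : Equiv.Perm G} (hf0 : f 0 = 0)
    {B : SRing G} (hB : {R | ∃ X ∈ Bl, R = pmap f (arcs X)} = {R | ∃ Y ∈ B.blocks, R = arcs Y}) :
    B.blocks = (f '' ·) '' Bl := by
  ext Y
  constructor
  · intro hY
    obtain ⟨X, hX, hXY⟩ := (Set.ext_iff.mp hB (arcs Y)).mpr ⟨Y, hY, rfl⟩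
    exact ⟨X, hX, (eq_image_of_pmap_arcs hf0 hXY.symm).symm⟩
  · rintro ⟨X, hX, rfl⟩
    obtain ⟨Y, hY, hXY⟩ := (Set.ext_iff.mp hB _).mp ⟨X, hX, rfl⟩
    show f '' X ∈ B.blocks
    rwa [← eq_image_of_pmap_arcs hf0 hXY]

lemma inducesOnSec.map_zero {f : Equiv.Perm G} {σ : Equiv.Perm (U ⧸ L.addSubgroupOf U)}
    (hσ : inducesOnSec f U L σ) (hf0 : f 0 = 0) : σ 0 = 0 := by
  simpa using hσ 0 0 (by simpa using hf0)

lemma inducesOnSec.map_add_of_addEquiv {φ : G ≃+ G} {σ : Equiv.Perm (U ⧸ L.addSubgroupOf U)}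
    (hσ : inducesOnSec φ.toEquiv U L σ) (hφU : ∀ x ∈ U, φ x ∈ U) (a b : U ⧸ L.addSubgroupOf U) :
    σ (a + b) = σ a + σ b := by
  obtain ⟨u, rfl⟩ := QuotientAddGroup.mk_surjective a
  obtain ⟨v, rfl⟩ := QuotientAddGroup.mk_surjective b
  rw [← QuotientAddGroup.mk_add, hσ u ⟨φ u, hφU u u.2⟩ rfl, hσ v ⟨φ v, hφU v v.2⟩ rfl,
    hσ (u + v) (⟨φ u, hφU u u.2⟩ + ⟨φ v, hφU v v.2⟩) (by simp), QuotientAddGroup.mk_add]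

lemma secInvariant.image_eq_self {f : Equiv.Perm G} (h : secInvariant f U L) (hf0 : f 0 = 0) :
    f '' L = L := by
  simpa [hf0] using h.2 0 U.zero_mem

theorem map_add_of_isCI_of_normalizes {Bl : Set (Set G)} (hU : IsASubgroup Bl U)
    (hL : IsASubgroup Bl L) (hCI : IsCIBlocks Bl)
    (hnorm : normalizesInto (secPerms (autPerm Bl) U L) (rSet (U ⧸ L.addSubgroupOf U)))
    {f : Equiv.Perm G} (hf : f ∈ isoPerm Bl) (hf0 : f 0 = 0) (hfS : secInvariant f U L)
    {σ : Equiv.Perm (U ⧸ L.addSubgroupOf U)} (hσ : inducesOnSec f U L σ)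
    (a b : U ⧸ L.addSubgroupOf U) : σ (a + b) = σ a + σ b := by
  obtain ⟨γ, hγ, hγ0, φ, hfφ⟩ := hCI.exists_eq_addEquiv_comp hf hf0
  have hγS := secInvariant_of_mem_autPerm hγ hγ0 hU hL
  obtain ⟨τ, hτ⟩ := hγS.exists_inducesOnSec
  have hτadd := map_add_of_normalizes (hτ.map_zero hγ0) (hnorm τ ⟨γ, hγ, hγS, hτ⟩)
  -- `σ τ⁻¹` is induced by `f γ⁻¹ = φ`, which is additive
  have hφ : inducesOnSec φ.toEquiv U L (σ * τ⁻¹) := by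
    convert hσ.mul hτ.inv fun x hx => (hγS.inv.mem_iff x).mpr hx using 1
    ext x
    simp [hfφ]
  have hφU : ∀ x ∈ U, φ x ∈ U := fun x hx => by
    simpa [hfφ] using (hfS.mem_iff _).mpr ((hγS.inv.mem_iff x).mpr hx)
  calc σ (a + b) = (σ * τ⁻¹) (τ (a + b)) := by simp
    _ = σ a + σ b := by rw [hτadd, hφ.map_add_of_addEquiv hφU]; simp

theorem inducesOnSec.mem_isoPerm_secBlocks [Finite G] (A : SRing G) (hLU : L ≤ U)
    (hU : IsASubgroup A.blocks U) (hL : IsASubgroup A.blocks L) {f : Equiv.Perm G}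
    (hf : f ∈ isoPerm A.blocks) (hf0 : f 0 = 0) (hfS : secInvariant f U L)
    {σ : Equiv.Perm (U ⧸ L.addSubgroupOf U)} (hσ : inducesOnSec f U L σ) :
    σ ∈ isoPerm (secBlocks A.blocks U L) := by
  obtain ⟨B, hAB⟩ := hf
  have hBA := blocks_eq_image_of_mem_isoPerm hf0 hAB
  have harcs : ∀ X ∈ A.blocks, pmap f (arcs X) = arcs (f '' X) := fun X hX => by
    obtain ⟨Y, hY, hXY⟩ := (Set.ext_iff.mp hAB _).mp ⟨X, hX, rfl⟩
    rwa [← eq_image_of_pmap_arcs hf0 hXY]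
  have hUB : IsASubgroup B.blocks U := by
    simpa [IsASubgroup, hBA, hfS.1] using IsASet.image f hU
  have hLB : IsASubgroup B.blocks L := by
    simpa [IsASubgroup, hBA, hfS.image_eq_self hf0] using IsASet.image f hL
  refine ⟨B.sec hLU hUB hLB, Set.ext fun R => ⟨?_, ?_⟩⟩
  · rintro ⟨Z, hZ, rfl⟩
    obtain ⟨X, hX, hXU, rfl⟩ := mem_secBlocks.mp hZ
    refine ⟨secImage U L (f '' X), ⟨f '' X, hBA ▸ ⟨X, hX, rfl⟩, ?_, rfl⟩,
      pmap_arcs_secImage_eq hLU hfS hσ (harcs X hX)⟩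
    rw [← hfS.1]
    exact Set.image_mono hXU
  · rintro ⟨W, hW, rfl⟩
    obtain ⟨Y, hY, hYU, rfl⟩ := mem_secBlocks.mp hW
    obtain ⟨X, hX, rfl⟩ : Y ∈ (f '' ·) '' A.blocks := hBA ▸ hY
    refine ⟨secImage U L X, ⟨X, hX, fun x hx => (hfS.mem_iff x).mp (hYU ⟨x, hx, rfl⟩), rfl⟩,
      (pmap_arcs_secImage_eq hLU hfS hσ (harcs X hX)).symm⟩

theorem map_add_of_isNormal_of_isCI_secBlocks [Finite G] (A : SRing G) (hLU : L ≤ U)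
    (hU : IsASubgroup A.blocks U) (hL : IsASubgroup A.blocks L)
    (hNorm : IsNormalBlocks (secBlocks A.blocks U L)) (hCI : IsCIBlocks (secBlocks A.blocks U L))
    {f : Equiv.Perm G} (hf : f ∈ isoPerm A.blocks) (hf0 : f 0 = 0) (hfS : secInvariant f U L)
    {σ : Equiv.Perm (U ⧸ L.addSubgroupOf U)} (hσ : inducesOnSec f U L σ)
    (a b : U ⧸ L.addSubgroupOf U) : σ (a + b) = σ a + σ b := by
  obtain ⟨γ, hγ, hγ0, ψ, hσψ⟩ :=
    hCI.exists_eq_addEquiv_comp (hσ.mem_isoPerm_secBlocks A hLU hU hL hf hf0 hfS) (hσ.map_zero hf0)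
  rw [hσψ, hσψ, hσψ, map_add_of_normalizes hγ0 (hNorm γ hγ), map_add]

end Iso

theorem statement3_general (G : Type*) [AddCommGroup G] [Finite G]
    (A : SRing G)
    (U L : AddSubgroup G) (hU : IsASubgroup A.blocks U) (hL : IsASubgroup A.blocks L)
    (hLU : L ≤ U)
    (hcond :
      (IsCIBlocks A.blocks ∧
        rSet (↥U ⧸ L.addSubgroupOf U) ⊆ secPerms (autPerm A.blocks) U L ∧
        normalizesInto (secPerms (autPerm A.blocks) U L)
          (rSet (↥U ⧸ L.addSubgroupOf U))) ∨
      (IsNormalBlocks (secBlocks A.blocks U L) ∧ IsCIBlocks (secBlocks A.blocks U L)))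
    (f : Equiv.Perm G) (hf : f ∈ isoPerm A.blocks) (hf0 : f 0 = 0)
    (hfS : secInvariant f U L)
    (σ : Equiv.Perm (↥U ⧸ L.addSubgroupOf U)) (hσ : inducesOnSec f U L σ) :
    (∃ ψ : AddAut (↥U ⧸ L.addSubgroupOf U), ∀ x, σ x = ψ x) ∧
      ∀ T : Set (↥U ⧸ L.addSubgroupOf U), AddSubgroup.closure T = ⊤ →
        (∀ t ∈ T, σ t = t) → σ = 1 := by
  have hadd : ∀ a b, σ (a + b) = σ a + σ b := by
    rcases hcond with ⟨hCI, -, hnorm⟩ | ⟨hNorm, hCI⟩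
    · exact map_add_of_isCI_of_normalizes hU hL hCI hnorm hf hf0 hfS hσ
    · exact map_add_of_isNormal_of_isCI_secBlocks A hLU hU hL hNorm hCI hf hf0 hfS hσ
  let ψ : AddAut (U ⧸ L.addSubgroupOf U) := AddEquiv.mk' σ hadd
  refine ⟨⟨ψ, fun _ => rfl⟩, fun T hT hTfix => Equiv.ext fun x => ?_⟩
  exact DFunLike.congr_fun
    (AddMonoidHom.eq_of_eqOn_dense hT (f := ψ.toAddMonoidHom) (g := AddMonoidHom.id _) hTfix) x

/-- Let `A` be a schurian S-ring over a finite abelian group `G` and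
`S = U/L` an `A`-section such that (1) `A` is CI and `S_r ⊴ Aut(A)^S`, or (2) `A_S` is
a normal CI-S-ring. Then for every `f ∈ iso_e(A)` with `S^f = S`, the induced
bijection `f^S` is a group automorphism of `S`; in particular `f^S = id_S` whenever
`f^S` fixes pointwise a generating set of `S`. -/
theorem statement3 (G : Type*) [AddCommGroup G] [Finite G]
    (A : SRing G) (hSch : IsSchurianBlocks A.blocks)
    (U L : AddSubgroup G) (hU : IsASubgroup A.blocks U) (hL : IsASubgroup A.blocks L)
    (hLU : L ≤ U)
    (hcond :
      (IsCIBlocks A.blocks ∧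
        rSet (↥U ⧸ L.addSubgroupOf U) ⊆ secPerms (autPerm A.blocks) U L ∧
        normalizesInto (secPerms (autPerm A.blocks) U L)
          (rSet (↥U ⧸ L.addSubgroupOf U))) ∨
      (IsNormalBlocks (secBlocks A.blocks U L) ∧ IsCIBlocks (secBlocks A.blocks U L)))
    (f : Equiv.Perm G) (hf : f ∈ isoPerm A.blocks) (hf0 : f 0 = 0)
    (hfS : secInvariant f U L)
    (σ : Equiv.Perm (↥U ⧸ L.addSubgroupOf U)) (hσ : inducesOnSec f U L σ) :
    (∃ ψ : AddAut (↥U ⧸ L.addSubgroupOf U), ∀ x, σ x = ψ x) ∧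
      ∀ T : Set (↥U ⧸ L.addSubgroupOf U), AddSubgroup.closure T = ⊤ →
        (∀ t ∈ T, σ t = t) → σ = 1 :=
  statement3_general G A U L hU hL hLU hcond f hf hf0 hfS σ hσ
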